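/- Fix integers r ≥ 3 and d ≥ 2, and indices 1 ≤ j < i ≤ d. In R = k[a_1,…,a_d,b_1,…,b_d,e_1,…,e_{2r−2}], let J be the ideal generated by the monomials {a_k b_l : j < l < k ≤ d} ∪ {a_k b_j : i < k ≤ d} (these are exactly the elements of F_d = {a_k b_l : 1 ≤ l < k ≤ d} that precede a_i b_j in the stated ordering). Then the ideal quotient J : ⟨a_i b_j⟩ equals the ideal generated by the variables a_{i+1}, …, a_d, b_{j+1}, …, b_{i−1}; in particular it is generated by exactly d − j − 1 variables. -/

import Mathlib

open MvPolynomial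

/-- The edge variables of `G_{r,d}`: `a_1, …, a_d`, `b_1, …, b_d` and
`e_1, …, e_{2r-2}`.  We use 1-based names via 0-based `Fin` indices:
`EVar.a ⟨i-1,_⟩` is `a_i`, etc. -/
inductive EVar (d r : ℕ) : Type where
  | a : Fin d → EVar d r
  | b : Fin d → EVar d r
  | e : Fin (2 * r - 2) → EVar d r
deriving DecidableEq

/-! The colon of a monomial ideal by a monomial `x^t` is generated by the monomials `x^(s - t)`,
`x^s` running over the generators. Dividing a generator `a_k b_l` of `J` by `a_i b_j` leaves `a_k`
when `l = j`, `b_l` when `k = i`, and `a_k b_l` itself otherwise; in the last case `a_k b_l` is a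
multiple of `b_l` if `l < i` and of `a_k` if `l ≥ i` (as then `k > l ≥ i`). Conversely each `a_k`,
`k > i`, comes from `a_k b_j` and each `b_l`, `j < l < i`, from `a_i b_l`. -/

namespace MvPolynomial

variable {σ R : Type*} [CommSemiring R]

theorem X_mul_X_eq_monomial (u v : σ) :
    (X u * X v : MvPolynomial σ R) = monomial (Finsupp.single u 1 + Finsupp.single v 1) 1 := by
  rw [X, X, monomial_mul, one_mul]

theorem support_mul_monomial_one (p : MvPolynomial σ R) (t : σ →₀ ℕ) :
    (p * monomial t 1).support = p.support.map (addRightEmbedding t) :=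
  AddMonoidAlgebra.support_coeff_mul_single p _ (by simp) t

theorem colon_span_monomial_image (S : Set (σ →₀ ℕ)) (t : σ →₀ ℕ) :
    (Ideal.span ((fun s => monomial s (1 : R)) '' S)).colon
        (Ideal.span {monomial t (1 : R)} : Set (MvPolynomial σ R)) =
      Ideal.span ((fun s => monomial (s - t) (1 : R)) '' S) := by
  ext f
  rw [Ideal.mem_colon_span_singleton, mem_ideal_span_monomial_image, support_mul_monomial_one,
    ← Set.image_image (fun s => monomial s (1 : R)) (· - t), mem_ideal_span_monomial_image]
  simp [tsub_le_iff_right]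

theorem span_monomial_image_eq_span_X_image {T : Set (σ →₀ ℕ)} {V : Set σ}
    (hT : ∀ s ∈ T, ∃ v ∈ V, s v ≠ 0) (hV : ∀ v ∈ V, ∃ s ∈ T, s ≤ Finsupp.single v 1) :
    Ideal.span ((fun s => monomial s (1 : R)) '' T) = Ideal.span (X '' V) := by
  refine le_antisymm (Ideal.span_le.2 ?_) (Ideal.span_le.2 ?_)
  · rintro _ ⟨s, hs, rfl⟩
    rw [SetLike.mem_coe, mem_ideal_span_X_image]
    intro m hm
    rw [Finset.mem_singleton.1 (support_monomial_subset hm)]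
    exact hT s hs
  · rintro _ ⟨v, hv, rfl⟩
    rw [SetLike.mem_coe, X, mem_ideal_span_monomial_image]
    intro m hm
    rw [Finset.mem_singleton.1 (support_monomial_subset hm)]
    exact hV v hv

theorem colon_span_monomial_eq_span_of_subset_range {G W : Set (MvPolynomial σ R)}
    {t : σ →₀ ℕ} (hG : G ⊆ Set.range fun s => monomial s (1 : R)) (hW : W ⊆ Set.range X)
    (hGW : ∀ s, monomial s 1 ∈ G → ∃ v, X v ∈ W ∧ t v < s v)
    (hWG : ∀ v, X v ∈ W → ∃ s, monomial s 1 ∈ G ∧ s ≤ Finsupp.single v 1 + t) :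
    (Ideal.span G).colon (Ideal.span {monomial t (1 : R)} : Set (MvPolynomial σ R)) =
      Ideal.span W := by
  rw [← Set.image_preimage_eq_of_subset hG, ← Set.image_preimage_eq_of_subset hW,
    colon_span_monomial_image, ← Set.image_image (fun s => monomial s (1 : R)) (· - t)]
  refine span_monomial_image_eq_span_X_image ?_ ?_
  · rintro _ ⟨s, hs, rfl⟩
    obtain ⟨v, hv, hlt⟩ := hGW s hs
    exact ⟨v, hv, by rw [Finsupp.tsub_apply]; omega⟩
  · intro v hv
    obtain ⟨s, hs, hle⟩ := hWG v hv
    exact ⟨s - t, ⟨s, hs, rfl⟩, tsub_le_iff_right.2 hle⟩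

end MvPolynomial

theorem colon_span_preceding_eq_span_X {k : Type} [CommSemiring k] [Nontrivial k] {i j d r : ℕ}
    (hj : 1 ≤ j) (hji : j < i) (hid : i ≤ d) :
    (Ideal.span
        ({p : MvPolynomial (EVar d r) k | ∃ l m : ℕ, ∃ (_ : j < l) (_ : l < m) (_ : m ≤ d),
            p = X (EVar.a ⟨m - 1, by omega⟩) * X (EVar.b ⟨l - 1, by omega⟩)} ∪
         {p : MvPolynomial (EVar d r) k | ∃ m : ℕ, ∃ (_ : i < m) (_ : m ≤ d),
            p = X (EVar.a ⟨m - 1, by omega⟩) * X (EVar.b ⟨j - 1, by omega⟩)})).colon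
      ((Ideal.span {X (EVar.a (⟨i - 1, by omega⟩ : Fin d)) * X (EVar.b (⟨j - 1, by omega⟩ : Fin d))} :
        Ideal (MvPolynomial (EVar d r) k)) : Set (MvPolynomial (EVar d r) k)) =
    Ideal.span
      ({p : MvPolynomial (EVar d r) k | ∃ m : ℕ, ∃ (_ : i < m) (_ : m ≤ d),
          p = X (EVar.a ⟨m - 1, by omega⟩)} ∪
       {p : MvPolynomial (EVar d r) k | ∃ l : ℕ, ∃ (_ : j < l) (_ : l < i),
          p = X (EVar.b ⟨l - 1, by omega⟩)}) := by
  simp only [X_mul_X_eq_monomial]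
  refine colon_span_monomial_eq_span_of_subset_range ?_ ?_ ?_ ?_
  · rintro _ (⟨l, m, -, -, -, rfl⟩ | ⟨m, -, -, rfl⟩) <;> exact ⟨_, rfl⟩
  · rintro _ (⟨m, -, -, rfl⟩ | ⟨l, -, -, rfl⟩) <;> exact ⟨_, rfl⟩
  · intro s hs
    rcases hs with ⟨l, m, hl, hlm, hmd, hs⟩ | ⟨m, him, hmd, hs⟩ <;>
      obtain rfl := monomial_left_injective one_ne_zero hs
    · by_cases hli : l < i
      · exact ⟨_, Or.inr ⟨l, hl, hli, rfl⟩, by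
          simp only [Finsupp.add_apply, Finsupp.single_apply, EVar.b.injEq, Fin.mk.injEq,
            reduceCtorEq]
          split_ifs <;> omega⟩
      · exact ⟨_, Or.inl ⟨m, by omega, hmd, rfl⟩, by
          simp only [Finsupp.add_apply, Finsupp.single_apply, EVar.a.injEq, Fin.mk.injEq,
            reduceCtorEq]
          split_ifs <;> omega⟩
    · exact ⟨_, Or.inl ⟨m, him, hmd, rfl⟩, by
        simp only [Finsupp.add_apply, Finsupp.single_apply, EVar.a.injEq, Fin.mk.injEq,
          reduceCtorEq]
        split_ifs <;> omega⟩
  · rintro v (⟨m, him, hmd, hv⟩ | ⟨l, hl, hli, hv⟩) <;> obtain rfl := X_injective hv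
    · exact ⟨_, Or.inr ⟨m, him, hmd, rfl⟩, add_le_add_right le_add_self _⟩
    · refine ⟨_, Or.inl ⟨l, i, hl, hli, hid, rfl⟩, ?_⟩
      rw [add_comm]
      exact add_le_add_right le_self_add _

theorem ncard_colon_generators {k : Type} [CommSemiring k] [Nontrivial k] {i j d r : ℕ}
    (hji : j < i) (hid : i ≤ d) :
    ({p : MvPolynomial (EVar d r) k | ∃ m : ℕ, ∃ (_ : i < m) (_ : m ≤ d),
          p = X (EVar.a ⟨m - 1, by omega⟩)} ∪
       {p : MvPolynomial (EVar d r) k | ∃ l : ℕ, ∃ (_ : j < l) (_ : l < i),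
          p = X (EVar.b ⟨l - 1, by omega⟩)}).ncard = d - j - 1 := by
  have hnd : ∀ n ∈ Set.Ioc i d ∪ Set.Ioo j i, n - 1 < d := by
    rintro n (⟨-, h⟩ | ⟨-, h⟩) <;> omega
  rw [← Set.ncard_congr (fun n hn => X (if n ≤ i then EVar.b ⟨n - 1, hnd n hn⟩ else
      EVar.a ⟨n - 1, hnd n hn⟩) : (n : ℕ) → n ∈ Set.Ioc i d ∪ Set.Ioo j i → MvPolynomial _ k)
      ?_ ?_ ?_]
  · rw [Set.ncard_union_eq (Set.disjoint_left.2 fun n h1 h2 => by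
      simp only [Set.mem_Ioc, Set.mem_Ioo] at h1 h2; omega), Set.ncard_Ioc_nat, Set.ncard_Ioo_nat]
    omega
  · rintro n (⟨h1, h2⟩ | ⟨h1, h2⟩)
    · exact Or.inl ⟨n, h1, h2, by rw [if_neg (by omega)]⟩
    · exact Or.inr ⟨n, h1, h2, by rw [if_pos (by omega)]⟩
  · intro n n' hn hn' h
    simp only [Set.mem_union, Set.mem_Ioc, Set.mem_Ioo] at hn hn'
    have := X_injective h
    split_ifs at this <;>
      simp only [EVar.a.injEq, EVar.b.injEq, Fin.mk.injEq] at this <;> omega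
  · rintro _ (⟨m, him, hmd, rfl⟩ | ⟨l, hl, hli, rfl⟩)
    · exact ⟨m, Or.inl ⟨him, hmd⟩, by rw [if_neg (by omega)]⟩
    · exact ⟨l, Or.inr ⟨hl, hli⟩, by rw [if_pos (by omega)]⟩

/-- Fix `r ≥ 3`, `d ≥ 2` and indices `1 ≤ j < i ≤ d`.  In
`R = k[a_1,…,a_d,b_1,…,b_d,e_1,…,e_{2r-2}]`, let `J` be the ideal generated by the
monomials `{a_k b_l : j < l < k ≤ d} ∪ {a_k b_j : i < k ≤ d}` (exactly the elements
of `F_d` preceding `a_i b_j` in the stated ordering).  Then the ideal quotient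
`J : ⟨a_i b_j⟩` is the ideal generated by the variables
`a_{i+1}, …, a_d, b_{j+1}, …, b_{i-1}`; in particular the generating set consists
of exactly `d − j − 1` variables. -/
theorem colon_ideal_Fd_case (k : Type) [Field k] (d r : ℕ)
    (i j : ℕ) (hj : 1 ≤ j) (hji : j < i) (hid : i ≤ d) :
    (Ideal.span
        ({p : MvPolynomial (EVar d r) k | ∃ l m : ℕ, ∃ (_ : j < l) (_ : l < m) (_ : m ≤ d),
            p = X (EVar.a ⟨m - 1, by omega⟩) * X (EVar.b ⟨l - 1, by omega⟩)} ∪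
         {p : MvPolynomial (EVar d r) k | ∃ m : ℕ, ∃ (_ : i < m) (_ : m ≤ d),
            p = X (EVar.a ⟨m - 1, by omega⟩) * X (EVar.b ⟨j - 1, by omega⟩)})).colon
      ((Ideal.span {X (EVar.a (⟨i - 1, by omega⟩ : Fin d)) * X (EVar.b (⟨j - 1, by omega⟩ : Fin d))} :
        Ideal (MvPolynomial (EVar d r) k)) : Set (MvPolynomial (EVar d r) k)) =
    Ideal.span
      ({p : MvPolynomial (EVar d r) k | ∃ m : ℕ, ∃ (_ : i < m) (_ : m ≤ d),
          p = X (EVar.a ⟨m - 1, by omega⟩)} ∪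
       {p : MvPolynomial (EVar d r) k | ∃ l : ℕ, ∃ (_ : j < l) (_ : l < i),
          p = X (EVar.b ⟨l - 1, by omega⟩)}) ∧
    ({p : MvPolynomial (EVar d r) k | ∃ m : ℕ, ∃ (_ : i < m) (_ : m ≤ d),
          p = X (EVar.a ⟨m - 1, by omega⟩)} ∪
       {p : MvPolynomial (EVar d r) k | ∃ l : ℕ, ∃ (_ : j < l) (_ : l < i),
          p = X (EVar.b ⟨l - 1, by omega⟩)}).ncard = d - j - 1 :=
  ⟨colon_span_preceding_eq_span_X hj hji hid, ncard_colon_generators hji hid⟩
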